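/- Let P_0 = N(0, n^{-1} I_N) and let P_k be the uniform mixture of N(θ, n^{-1} I_N) over all θ ∈ C(a,k) as above. Fix 0 < ε < 1 and suppose k a⁴ n² ≤ log(1 + ε²). Then the L₁ distance satisfies L₁(P_0, P_k) = ∫ |dP_0 − dP_k| ≤ ε. -/

import Mathlib

/-!
Write `p₀` for the centred Gaussian density and `p_k` for the mixture. By Cauchy–Schwarz,
`∫ |p₀ - p_k| ≤ (∫ (p₀ - p_k)² / p₀)^{1/2} = (∫ p_k² / p₀ - 1)^{1/2}`. Expanding the square,
`∫ p_k² / p₀` is the average over pairs of vertices `θ, θ'` of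
`∫ p_θ p_θ' / p₀ = exp (n ⟪θ, θ'⟫)`, and since the coordinates of the vertices are independent
signs this average factorises as `cosh (n a²) ^ k ≤ exp (k a⁴ n² / 2) ≤ 1 + ε²`.
-/

open MeasureTheory Real ProbabilityTheory
open scoped NNReal

section CauchySchwarz

variable {α : Type*} [MeasurableSpace α] {μ : Measure α}

theorem integral_sqrt_mul_sqrt_le {f g : α → ℝ} (hf0 : 0 ≤ᵐ[μ] f) (hg0 : 0 ≤ᵐ[μ] g)
    (hf : Integrable f μ) (hg : Integrable g μ) :
    ∫ x, √(f x) * √(g x) ∂μ ≤ √(∫ x, f x ∂μ) * √(∫ x, g x ∂μ) := by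
  have hsq : ∀ {h : α → ℝ}, 0 ≤ᵐ[μ] h → (fun x => √(h x) ^ (2 : ℝ)) =ᵐ[μ] h := fun h0 => by
    filter_upwards [h0] with x hx
    rw [rpow_two, sq_sqrt hx]
  have hmem : ∀ {h : α → ℝ}, 0 ≤ᵐ[μ] h → Integrable h μ →
      MemLp (fun x => √(h x)) (ENNReal.ofReal 2) μ := fun h0 hi => by
    rw [ENNReal.ofReal_ofNat, memLp_two_iff_integrable_sq
      (continuous_sqrt.comp_aestronglyMeasurable hi.aestronglyMeasurable)]
    refine hi.congr ?_
    filter_upwards [h0] with x hx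
    exact (sq_sqrt hx).symm
  have holder := integral_mul_le_Lp_mul_Lq_of_nonneg Real.HolderConjugate.two_two
    (ae_of_all _ fun x => sqrt_nonneg (f x)) (ae_of_all _ fun x => sqrt_nonneg (g x))
    (hmem hf0 hf) (hmem hg0 hg)
  rwa [integral_congr_ae (hsq hf0), integral_congr_ae (hsq hg0), ← sqrt_eq_rpow,
    ← sqrt_eq_rpow] at holder

theorem integral_abs_sub_le_sqrt_chiSq {p q : α → ℝ} (hp : ∀ x, 0 < p x)
    (hp_int : Integrable p μ) (hq_int : Integrable q μ)
    (hχ : Integrable (fun x => q x ^ 2 / p x) μ) (hp1 : ∫ x, p x ∂μ = 1)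
    (hq1 : ∫ x, q x ∂μ = 1) :
    ∫ x, |p x - q x| ∂μ ≤ √(∫ x, q x ^ 2 / p x ∂μ - 1) := by
  have hexpand : ∀ x, (p x - q x) ^ 2 / p x = p x - 2 * q x + q x ^ 2 / p x := fun x => by
    field_simp [(hp x).ne']
    ring
  have hlin : Integrable (fun x => p x - 2 * q x) μ := hp_int.sub (hq_int.const_mul 2)
  have hD_int : Integrable (fun x => (p x - q x) ^ 2 / p x) μ := by
    simp_rw [hexpand]
    exact hlin.add hχ
  have hD : ∫ x, (p x - q x) ^ 2 / p x ∂μ = ∫ x, q x ^ 2 / p x ∂μ - 1 := by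
    simp_rw [hexpand]
    rw [integral_add hlin hχ, integral_sub hp_int (hq_int.const_mul 2), integral_const_mul,
      hp1, hq1]
    ring
  have habs : ∀ x, |p x - q x| = √((p x - q x) ^ 2 / p x) * √(p x) := fun x => by
    rw [← sqrt_mul (div_nonneg (sq_nonneg _) (hp x).le), div_mul_cancel₀ _ (hp x).ne',
      sqrt_sq_eq_abs]
  calc ∫ x, |p x - q x| ∂μ = ∫ x, √((p x - q x) ^ 2 / p x) * √(p x) ∂μ := by simp_rw [habs]
    _ ≤ √(∫ x, (p x - q x) ^ 2 / p x ∂μ) * √(∫ x, p x ∂μ) :=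
      integral_sqrt_mul_sqrt_le (ae_of_all _ fun x => div_nonneg (sq_nonneg _) (hp x).le)
        (ae_of_all _ fun x => (hp x).le) hD_int hp_int
    _ = √(∫ x, q x ^ 2 / p x ∂μ - 1) := by rw [hD, hp1, sqrt_one, mul_one]

end CauchySchwarz

lemma gaussianPDFReal_inv_toNNReal {n : ℝ} (hn : 0 < n) (m x : ℝ) :
    gaussianPDFReal m n⁻¹.toNNReal x = √(n / (2 * π)) * exp (-(n * (x - m) ^ 2) / 2) := by
  rw [gaussianPDFReal, coe_toNNReal _ (inv_nonneg.2 hn.le), ← sqrt_inv]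
  congr 2 <;> field_simp

lemma gaussianPDFReal_mul_div {v : ℝ≥0} (hv : v ≠ 0) (m m' x : ℝ) :
    gaussianPDFReal m v x * gaussianPDFReal m' v x / gaussianPDFReal 0 v x
      = exp (m * m' / v) * gaussianPDFReal (m + m') v x := by
  rw [div_eq_iff (gaussianPDFReal_pos _ _ _ hv).ne']
  simp only [gaussianPDFReal]
  have hexp : -(x - m) ^ 2 / (2 * v) + -(x - m') ^ 2 / (2 * v)
      = m * m' / v + (-(x - (m + m')) ^ 2 / (2 * v) + -(x - 0) ^ 2 / (2 * v)) := by
    field_simp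
    ring
  calc _ = (√(2 * π * v))⁻¹ * (√(2 * π * v))⁻¹ *
        exp (-(x - m) ^ 2 / (2 * v) + -(x - m') ^ 2 / (2 * v)) := by rw [exp_add]; ring
    _ = _ := by rw [hexp, exp_add, exp_add]; ring

section GaussianPi

variable {ι : Type*} [Fintype ι] {v : ℝ≥0}

noncomputable def gaussianPDFPi (m : ι → ℝ) (v : ℝ≥0) (x : ι → ℝ) : ℝ :=
  ∏ i, gaussianPDFReal (m i) v (x i)

lemma gaussianPDFPi_pos (hv : v ≠ 0) (m x : ι → ℝ) : 0 < gaussianPDFPi m v x :=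
  Finset.prod_pos fun _ _ => gaussianPDFReal_pos _ _ _ hv

lemma integrable_gaussianPDFPi (m : ι → ℝ) : Integrable (gaussianPDFPi m v) :=
  Integrable.fintype_prod (f := fun i => gaussianPDFReal (m i) v)
    fun _ => integrable_gaussianPDFReal _ _

lemma integral_gaussianPDFPi (hv : v ≠ 0) (m : ι → ℝ) : ∫ x, gaussianPDFPi m v x = 1 := by
  simp only [gaussianPDFPi]
  rw [integral_fintype_prod_volume_eq_prod (fun i => gaussianPDFReal (m i) v)]
  simp [integral_gaussianPDFReal_eq_one _ hv]

lemma gaussianPDFPi_mul_div (hv : v ≠ 0) (m m' x : ι → ℝ) :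
    gaussianPDFPi m v x * gaussianPDFPi m' v x / gaussianPDFPi 0 v x
      = exp ((∑ i, m i * m' i) / v) * gaussianPDFPi (m + m') v x := by
  simp only [gaussianPDFPi, ← Finset.prod_mul_distrib, ← Finset.prod_div_distrib,
    Pi.zero_apply, gaussianPDFReal_mul_div hv, Finset.sum_div, exp_sum, Pi.add_apply]

lemma integrable_gaussianPDFPi_mul_div (hv : v ≠ 0) (m m' : ι → ℝ) :
    Integrable (fun x => gaussianPDFPi m v x * gaussianPDFPi m' v x / gaussianPDFPi 0 v x) := by
  simp_rw [gaussianPDFPi_mul_div hv]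
  exact (integrable_gaussianPDFPi _).const_mul _

lemma integral_gaussianPDFPi_mul_div (hv : v ≠ 0) (m m' : ι → ℝ) :
    ∫ x, gaussianPDFPi m v x * gaussianPDFPi m' v x / gaussianPDFPi 0 v x
      = exp ((∑ i, m i * m' i) / v) := by
  simp_rw [gaussianPDFPi_mul_div hv]
  rw [integral_const_mul, integral_gaussianPDFPi hv, mul_one]

variable {S : Type*} [Fintype S]

lemma integral_const_mul_sum_gaussianPDFPi (hv : v ≠ 0) (m : S → ι → ℝ) (c : ℝ) :
    ∫ x, c * ∑ s, gaussianPDFPi (m s) v x = c * Fintype.card S := by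
  rw [integral_const_mul, integral_finsetSum _ fun s _ => integrable_gaussianPDFPi _]
  simp [integral_gaussianPDFPi hv]

lemma integrable_const_mul_sum_gaussianPDFPi (m : S → ι → ℝ) (c : ℝ) :
    Integrable (fun x => c * ∑ s, gaussianPDFPi (m s) v x) :=
  (integrable_finsetSum _ fun s _ => integrable_gaussianPDFPi (m s)).const_mul c

lemma sq_const_mul_sum_div (p : ℝ) (c : ℝ) (q : S → ℝ) :
    (c * ∑ s, q s) ^ 2 / p = c ^ 2 * ∑ s, ∑ s', q s * q s' / p := by
  rw [mul_pow, sq (∑ s, q s), Finset.sum_mul_sum, mul_div_assoc, Finset.sum_div]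
  simp_rw [Finset.sum_div]

lemma integrable_sq_const_mul_sum_gaussianPDFPi_div (hv : v ≠ 0) (m : S → ι → ℝ) (c : ℝ) :
    Integrable (fun x => (c * ∑ s, gaussianPDFPi (m s) v x) ^ 2 / gaussianPDFPi 0 v x) := by
  simp_rw [sq_const_mul_sum_div]
  exact (integrable_finsetSum _ fun s _ => integrable_finsetSum _ fun s' _ =>
    integrable_gaussianPDFPi_mul_div hv _ _).const_mul _

lemma integral_sq_const_mul_sum_gaussianPDFPi_div (hv : v ≠ 0) (m : S → ι → ℝ) (c : ℝ) :
    ∫ x, (c * ∑ s, gaussianPDFPi (m s) v x) ^ 2 / gaussianPDFPi 0 v x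
      = c ^ 2 * ∑ s, ∑ s', exp ((∑ i, m s i * m s' i) / v) := by
  simp_rw [sq_const_mul_sum_div]
  rw [integral_const_mul, integral_finsetSum _ fun s _ => integrable_finsetSum _ fun s' _ =>
    integrable_gaussianPDFPi_mul_div hv _ _]
  simp_rw [integral_finsetSum _ fun s' _ => integrable_gaussianPDFPi_mul_div hv _ _,
    integral_gaussianPDFPi_mul_div hv]

end GaussianPi

lemma Fintype.sum_sum_prod_eq_pow {ι α R : Type*} [Fintype ι] [DecidableEq ι] [Fintype α]
    [CommSemiring R] (F : α → α → R) :
    ∑ s : ι → α, ∑ s' : ι → α, ∏ i, F (s i) (s' i)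
      = (∑ b, ∑ b', F b b') ^ Fintype.card ι := by
  calc _ = ∑ s : ι → α, ∏ i, ∑ b', F (s i) b' :=
        Finset.sum_congr rfl fun s _ => (Fintype.prod_sum fun i b' => F (s i) b').symm
    _ = _ := by
      rw [← Fintype.prod_sum (fun _ b => ∑ b', F b b'), Finset.prod_const, Finset.card_univ]

lemma sum_dite_lt_eq_sum {M : Type*} [AddCommMonoid M] {k N : ℕ} (hkN : k ≤ N) (g : Fin k → M) :
    ∑ i : Fin N, (if h : (i : ℕ) < k then g ⟨i, h⟩ else 0) = ∑ j, g j :=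
  (Fintype.sum_of_injective (Fin.castLE hkN) (Fin.castLE_injective hkN) _ _
    (fun i hi => dif_neg fun h => hi ⟨⟨i, h⟩, rfl⟩) (fun j => by simp)).symm

noncomputable def cubeVertex (N : ℕ) {k : ℕ} (a : ℝ) (s : Fin k → Bool) : Fin N → ℝ :=
  fun i => if h : (i : ℕ) < k then (if s ⟨i, h⟩ then a else -a) else 0

lemma sum_cubeVertex_mul {k N : ℕ} (hkN : k ≤ N) (a : ℝ) (s s' : Fin k → Bool) :
    ∑ i, cubeVertex N a s i * cubeVertex N a s' i
      = ∑ j, (if s j then a else -a) * (if s' j then a else -a) := by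
  rw [← sum_dite_lt_eq_sum hkN]
  refine Finset.sum_congr rfl fun i _ => ?_
  unfold cubeVertex
  split_ifs <;> simp

lemma sum_sum_exp_sum_cubeVertex_mul {k N : ℕ} (hkN : k ≤ N) (a w : ℝ) :
    ∑ s : Fin k → Bool, ∑ s' : Fin k → Bool,
        exp ((∑ i, cubeVertex N a s i * cubeVertex N a s' i) / w) = (4 * cosh (a ^ 2 / w)) ^ k := by
  simp_rw [sum_cubeVertex_mul hkN, Finset.sum_div, exp_sum]
  rw [Fintype.sum_sum_prod_eq_pow (ι := Fin k)
    (fun b b' : Bool => exp ((if b then a else -a) * (if b' then a else -a) / w)), Fintype.card_fin]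
  congr 1
  simp only [Fintype.sum_bool, ↓reduceIte, Bool.false_eq_true, cosh_eq]
  ring_nf

lemma sqrt_cosh_pow_sub_one_le {k : ℕ} {t ε : ℝ} (hε : 0 ≤ ε)
    (h : k * t ^ 2 ≤ log (1 + ε ^ 2)) : √(cosh t ^ k - 1) ≤ ε := by
  have hcosh : cosh t ^ k ≤ 1 + ε ^ 2 :=
    calc cosh t ^ k ≤ exp (t ^ 2 / 2) ^ k :=
          pow_le_pow_left₀ (cosh_pos t).le (cosh_le_exp_half_sq t) k
      _ = exp (k * (t ^ 2 / 2)) := by rw [← exp_nat_mul]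
      _ ≤ exp (log (1 + ε ^ 2)) :=
          exp_le_exp.2 (by nlinarith [sq_nonneg t, k.cast_nonneg (α := ℝ)])
      _ = 1 + ε ^ 2 := exp_log (by positivity)
  calc √(cosh t ^ k - 1) ≤ √(ε ^ 2) := sqrt_le_sqrt (by linarith)
    _ = ε := sqrt_sq hε

theorem L1_mixture_bound_general (N k : ℕ) (hkN : k ≤ N)
    (a : ℝ) (n : ℝ) (hn : 0 < n)
    (ε : ℝ) (hε0 : 0 < ε)
    (hsep : k * a ^ 4 * n ^ 2 ≤ Real.log (1 + ε ^ 2)) :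
    let φ : (Fin N → ℝ) → (Fin N → ℝ) → ℝ := fun θ x =>
      ∏ i, (Real.sqrt (n / (2 * π)) * Real.exp (-(n * (x i - θ i) ^ 2) / 2))
    let vertex : (Fin k → Bool) → Fin N → ℝ := fun s i =>
      if h : (i : ℕ) < k then (if s ⟨i, h⟩ then a else -a) else 0
    let p0 : (Fin N → ℝ) → ℝ := φ 0
    let pk : (Fin N → ℝ) → ℝ := fun x => (2 : ℝ)⁻¹ ^ k * ∑ s : Fin k → Bool, φ (vertex s) x
    ∫ x, |p0 x - pk x| ≤ ε := by
  intro φ vertex p0 pk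
  set v := n⁻¹.toNNReal
  have hv : v ≠ 0 := by simpa [v] using hn
  have hφ : ∀ θ x, φ θ x = gaussianPDFPi θ v x := fun θ x => by
    simp only [φ, gaussianPDFPi, v, gaussianPDFReal_inv_toNNReal hn]
  have hp0 : p0 = gaussianPDFPi 0 v := funext (hφ 0)
  have hpk : pk = fun x =>
      (2 : ℝ)⁻¹ ^ k * ∑ s : Fin k → Bool, gaussianPDFPi (cubeVertex N a s) v x :=
    funext fun x => by simp only [pk, hφ]; rfl
  have hweight : (2 : ℝ)⁻¹ ^ k * Fintype.card (Fin k → Bool) = 1 := by simp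
  simp only [hp0, hpk]
  calc _ ≤ √((∫ x, ((2 : ℝ)⁻¹ ^ k * ∑ s : Fin k → Bool,
              gaussianPDFPi (cubeVertex N a s) v x) ^ 2 / gaussianPDFPi 0 v x) - 1) :=
        integral_abs_sub_le_sqrt_chiSq (gaussianPDFPi_pos hv 0) (integrable_gaussianPDFPi 0)
          (integrable_const_mul_sum_gaussianPDFPi _ _)
          (integrable_sq_const_mul_sum_gaussianPDFPi_div hv _ _) (integral_gaussianPDFPi hv 0)
          (by rw [integral_const_mul_sum_gaussianPDFPi hv (cubeVertex N a), hweight])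
    _ = √(cosh (a ^ 2 / v) ^ k - 1) := by
        rw [integral_sq_const_mul_sum_gaussianPDFPi_div hv (cubeVertex N a),
          sum_sum_exp_sum_cubeVertex_mul hkN, ← pow_mul, mul_comm k 2, pow_mul, ← mul_pow]
        congr 3
        ring
    _ ≤ ε := sqrt_cosh_pow_sub_one_le hε0.le <| by
        rw [coe_toNNReal _ (inv_nonneg.2 hn.le)]
        convert hsep using 1
        field_simp

/-- L₁ bound between `N(0, n⁻¹ I_N)` and the uniform mixture of `N(θ, n⁻¹ I_N)` over the
vertices `θ ∈ C(a,k)`: if `k a⁴ n² ≤ log(1 + ε²)` with `0 < ε < 1`, then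
`∫ |p₀ - p_k| ≤ ε`. -/
theorem L1_mixture_bound (N k : ℕ) (hk1 : 1 ≤ k) (hkN : k ≤ N)
    (a : ℝ) (ha : 0 < a) (n : ℝ) (hn : 0 < n)
    (ε : ℝ) (hε0 : 0 < ε) (hε1 : ε < 1)
    (hsep : k * a ^ 4 * n ^ 2 ≤ Real.log (1 + ε ^ 2)) :
    let φ : (Fin N → ℝ) → (Fin N → ℝ) → ℝ := fun θ x =>
      ∏ i, (Real.sqrt (n / (2 * π)) * Real.exp (-(n * (x i - θ i) ^ 2) / 2))
    let vertex : (Fin k → Bool) → Fin N → ℝ := fun s i =>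
      if h : (i : ℕ) < k then (if s ⟨i, h⟩ then a else -a) else 0
    let p0 : (Fin N → ℝ) → ℝ := φ 0
    let pk : (Fin N → ℝ) → ℝ := fun x => (2 : ℝ)⁻¹ ^ k * ∑ s : Fin k → Bool, φ (vertex s) x
    ∫ x, |p0 x - pk x| ≤ ε :=
  L1_mixture_bound_general N k hkN a n hn ε hε0 hsep
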